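/- Let μ < 1/4 and ε ∈ (0, min{1, √(1 − 4μ)}). Then there exists ρ ∈ (0, min{1, ρ₀}) such that on Ω_ρ the functions x ↦ δ(x)^{β₊}(1 − δ(x)^ε) and x ↦ δ(x)^{β₋}(1 + δ(x)^ε) are positive super-harmonics of L_μ, while x ↦ δ(x)^{β₊}(1 + δ(x)^ε) and x ↦ δ(x)^{β₋}(1 − δ(x)^ε) are positive sub-harmonics of L_μ. -/

import Mathlib

open Set Metric MeasureTheory Real

noncomputable section

/-- Distance to the boundary of `Ω`. -/
def bdist {N : ℕ} (Ω : Set (EuclideanSpace ℝ (Fin N))) (x : EuclideanSpace ℝ (Fin N)) : ℝ :=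
  Metric.infDist x Ωᶜ

/-- The collar `Ω_ρ = {x ∈ Ω : δ(x) < ρ}`. -/
def collar {N : ℕ} (Ω : Set (EuclideanSpace ℝ (Fin N))) (ρ : ℝ) :
    Set (EuclideanSpace ℝ (Fin N)) :=
  {x ∈ Ω | bdist Ω x < ρ}

/-- The ring `Ω_{ε,ρ} = {x ∈ Ω : ε < δ(x) < ρ}`. -/
def ring' {N : ℕ} (Ω : Set (EuclideanSpace ℝ (Fin N))) (ε ρ : ℝ) :
    Set (EuclideanSpace ℝ (Fin N)) :=
  {x ∈ Ω | ε < bdist Ω x ∧ bdist Ω x < ρ}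

/-- The Laplacian. -/
def lap {N : ℕ} (f : EuclideanSpace ℝ (Fin N) → ℝ) (x : EuclideanSpace ℝ (Fin N)) : ℝ :=
  ∑ i : Fin N, fderiv ℝ (fun y => fderiv ℝ f y (EuclideanSpace.single i 1)) x
    (EuclideanSpace.single i 1)

/-- `ρ₀` is a good collar width: `δ` is `C²` on `Ω_{ρ₀}`, `|∇δ| = 1` there, `Δδ` bounded. -/
def GoodCollar {N : ℕ} (Ω : Set (EuclideanSpace ℝ (Fin N))) (ρ₀ : ℝ) : Prop :=
  0 < ρ₀ ∧ ContDiffOn ℝ 2 (bdist Ω) (collar Ω ρ₀) ∧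
    (∀ x ∈ collar Ω ρ₀, ‖gradient (bdist Ω) x‖ = 1) ∧
    ∃ M, ∀ x ∈ collar Ω ρ₀, |lap (bdist Ω) x| ≤ M

/-- A super-harmonic of `L_μ = -Δ - μ/δ²` on `G`. -/
def SuperHarm {N : ℕ} (Ω : Set (EuclideanSpace ℝ (Fin N))) (μ : ℝ)
    (G : Set (EuclideanSpace ℝ (Fin N))) (h : EuclideanSpace ℝ (Fin N) → ℝ) : Prop :=
  ContDiffOn ℝ 2 h G ∧ ∀ x ∈ G, 0 ≤ -(lap h x) - μ / (bdist Ω x) ^ 2 * h x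

/-- A sub-harmonic of `L_μ = -Δ - μ/δ²` on `G`. -/
def SubHarm {N : ℕ} (Ω : Set (EuclideanSpace ℝ (Fin N))) (μ : ℝ)
    (G : Set (EuclideanSpace ℝ (Fin N))) (h : EuclideanSpace ℝ (Fin N) → ℝ) : Prop :=
  ContDiffOn ℝ 2 h G ∧ ∀ x ∈ G, -(lap h x) - μ / (bdist Ω x) ^ 2 * h x ≤ 0

/-- A positive local super-harmonic of `L_μ`, defined on the collar `Ω_σ`. -/
def PosSuperHarmOn {N : ℕ} (Ω : Set (EuclideanSpace ℝ (Fin N))) (μ σ : ℝ)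
    (h : EuclideanSpace ℝ (Fin N) → ℝ) : Prop :=
  SuperHarm Ω μ (collar Ω σ) h ∧ ∀ x ∈ collar Ω σ, 0 < h x

/-- A sub-solution of `(*)`: `-Δu - (μ/δ²)u + u^p/δ^s = 0` on `G`. -/
def SubSol {N : ℕ} (Ω : Set (EuclideanSpace ℝ (Fin N))) (μ s p : ℝ)
    (G : Set (EuclideanSpace ℝ (Fin N))) (u : EuclideanSpace ℝ (Fin N) → ℝ) : Prop :=
  ContDiffOn ℝ 2 u G ∧ (∀ x ∈ G, 0 ≤ u x) ∧
    ∀ x ∈ G, -(lap u x) - μ / (bdist Ω x) ^ 2 * u x + (u x) ^ p / (bdist Ω x) ^ s ≤ 0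

/-- A super-solution of `(*)` on `G`. -/
def SuperSol {N : ℕ} (Ω : Set (EuclideanSpace ℝ (Fin N))) (μ s p : ℝ)
    (G : Set (EuclideanSpace ℝ (Fin N))) (u : EuclideanSpace ℝ (Fin N) → ℝ) : Prop :=
  ContDiffOn ℝ 2 u G ∧ (∀ x ∈ G, 0 < u x) ∧
    ∀ x ∈ G, 0 ≤ -(lap u x) - μ / (bdist Ω x) ^ 2 * u x + (u x) ^ p / (bdist Ω x) ^ s

/-- A regularized distance `(d, c)` on `Ω`. -/
def RegDist {N : ℕ} (Ω : Set (EuclideanSpace ℝ (Fin N))) (d : EuclideanSpace ℝ (Fin N) → ℝ)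
    (c : ℝ) : Prop :=
  1 ≤ c ∧ ContDiffOn ℝ 2 d Ω ∧ (∀ x ∈ Ω, 0 < d x) ∧
    (∀ x ∈ Ω, c⁻¹ * bdist Ω x ≤ d x ∧ d x ≤ c * bdist Ω x) ∧
    (∀ x ∈ Ω, ‖gradient d x‖ ≤ c) ∧ (∀ x ∈ Ω, |lap d x| ≤ c / d x)

/-!
Write `δ^β (1 + s δ^ε) = F ∘ δ` with `F t = t^β + s t^(β+ε)`. Since `|∇δ| = 1`, the chain rule
gives `L_μ (F ∘ δ) = -(F'' + μ F / t²)(δ) - F'(δ) Δδ`. For a root `β` of `β(1 - β) = μ` the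
leading power `t^(β-2)` cancels in `F'' + μ F / t²`, leaving `s ε (ε + 2β - 1) t^(β+ε-2)`. As
`0 < ε < 2√(1/4 - μ)`, this has the sign of `s` for `β₊` and of `-s` for `β₋`, and modulus at least
`ε (2√(1/4 - μ) - ε) t^(β+ε-2)`. Because `Δδ` is bounded, `|F'(δ) Δδ| ≤ C δ^(1-ε) δ^(β+ε-2)`,
which is dominated by the main term once `δ < ρ` with `ρ` small.
-/

open Filter Topology

section Laplacian

variable {N : ℕ}

lemma Filter.EventuallyEq.lap_eq {h k : EuclideanSpace ℝ (Fin N) → ℝ}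
    {x : EuclideanSpace ℝ (Fin N)} (H : h =ᶠ[𝓝 x] k) : lap h x = lap k x := by
  refine Finset.sum_congr rfl fun i _ => congrArg (fun L : EuclideanSpace ℝ (Fin N) →L[ℝ] ℝ => L _)
    (EventuallyEq.fderiv_eq ?_)
  filter_upwards [H.eventuallyEq_nhds] with y hy
  rw [hy.fderiv_eq]

lemma sum_fderiv_single_sq (g : EuclideanSpace ℝ (Fin N) → ℝ) (x : EuclideanSpace ℝ (Fin N)) :
    ∑ i : Fin N, (fderiv ℝ g x (EuclideanSpace.single i 1)) ^ 2 = ‖gradient g x‖ ^ 2 := by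
  have hcoord (i : Fin N) : fderiv ℝ g x (EuclideanSpace.single i 1) = gradient g x i := by
    rw [gradient, ← InnerProductSpace.toDual_symm_apply, EuclideanSpace.inner_single_right]
    simp
  simp only [hcoord, EuclideanSpace.norm_sq_eq, Real.norm_eq_abs, sq_abs]

lemma lap_comp {U : Set (EuclideanSpace ℝ (Fin N))} (hU : IsOpen U)
    {g : EuclideanSpace ℝ (Fin N) → ℝ} (hg : ContDiffOn ℝ 2 g U) {f f' f'' : ℝ → ℝ}
    (hf : ∀ y ∈ U, HasDerivAt f (f' (g y)) (g y))
    (hf' : ∀ y ∈ U, HasDerivAt f' (f'' (g y)) (g y))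
    {x : EuclideanSpace ℝ (Fin N)} (hx : x ∈ U) :
    lap (f ∘ g) x = f'' (g x) * ‖gradient g x‖ ^ 2 + f' (g x) * lap g x := by
  have hgd : ∀ y ∈ U, DifferentiableAt ℝ g y := fun y hy =>
    (hg.contDiffAt (hU.mem_nhds hy)).differentiableAt (by norm_num)
  have hDg : DifferentiableAt ℝ (fderiv ℝ g) x :=
    ((hg.fderiv_of_isOpen hU (by norm_num : (1 : WithTop ℕ∞) + 1 ≤ 2)).contDiffAt
      (hU.mem_nhds hx)).differentiableAt one_ne_zero
  rw [← sum_fderiv_single_sq, lap, lap, Finset.mul_sum, Finset.mul_sum, ← Finset.sum_add_distrib]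
  refine Finset.sum_congr rfl fun i _ => ?_
  set e := EuclideanSpace.single (𝕜 := ℝ) i (1 : ℝ)
  have hfirst : (fun y => fderiv ℝ (f ∘ g) y e) =ᶠ[𝓝 x] fun y => f' (g y) * fderiv ℝ g y e := by
    filter_upwards [hU.mem_nhds hx] with y hy
    simp [((hf y hy).comp_hasFDerivAt y (hgd y hy).hasFDerivAt).fderiv]
  have hsecond : HasFDerivAt (fun y => f' (g y) * fderiv ℝ g y e) _ x :=
    ((hf' x hx).comp_hasFDerivAt x (hgd x hx).hasFDerivAt).mul
      (hDg.clm_apply (differentiableAt_const e)).hasFDerivAt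
  rw [hfirst.fderiv_eq, hsecond.fderiv]
  simp only [add_apply, smul_apply, smul_eq_mul, Function.comp_apply]
  ring

end Laplacian

/-- The profile `t^β (1 + s t^ε)` is `rpowSum 1 β s (β + ε) t` for `t > 0`; this two-term shape
is preserved by differentiation. -/
def rpowSum (a p b q t : ℝ) : ℝ := a * t ^ p + b * t ^ q

section RpowSum

variable {a p b q t : ℝ}

lemma hasDerivAt_rpowSum (ht : t ≠ 0) :
    HasDerivAt (rpowSum a p b q) (rpowSum (a * p) (p - 1) (b * q) (q - 1) t) t :=
  (((Real.hasDerivAt_rpow_const (Or.inl ht)).const_mul a).add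
    ((Real.hasDerivAt_rpow_const (Or.inl ht)).const_mul b)).congr_deriv
    (by simp only [rpowSum]; ring)

lemma contDiffAt_rpowSum {n : WithTop ℕ∞} (ht : t ≠ 0) : ContDiffAt ℝ n (rpowSum a p b q) t :=
  (contDiffAt_const.mul (Real.contDiffAt_rpow_const_of_ne ht)).add
    (contDiffAt_const.mul (Real.contDiffAt_rpow_const_of_ne ht))

end RpowSum

section Profile

variable {β ε μ s t : ℝ}

lemma rpowSum_profile_eq (ht : 0 < t) :
    rpowSum 1 β s (β + ε) t = t ^ β * (1 + s * t ^ ε) := by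
  rw [rpowSum, Real.rpow_add ht]
  ring

lemma rpowSum_profile_second_deriv_add (hβ : β * (β - 1) + μ = 0) (ht : 0 < t) :
    rpowSum (1 * β * (β - 1)) (β - 1 - 1) (s * (β + ε) * (β + ε - 1)) (β + ε - 1 - 1) t
        + μ / t ^ 2 * rpowSum 1 β s (β + ε) t
      = s * (ε * (ε + 2 * β - 1)) * t ^ (β + ε - 2) := by
  have hsq : t ^ (2 : ℝ) = t ^ 2 := Real.rpow_two t
  have h1 : t ^ β = t ^ (β - 2) * t ^ 2 := by
    rw [← hsq, ← Real.rpow_add ht]; ring_nf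
  have h2 : t ^ (β + ε) = t ^ (β + ε - 2) * t ^ 2 := by
    rw [← hsq, ← Real.rpow_add ht]; ring_nf
  rw [rpowSum, rpowSum, h1, h2, show β - 1 - 1 = β - 2 by ring,
    show β + ε - 1 - 1 = β + ε - 2 by ring]
  field_simp
  linear_combination (t ^ (β - 2) + s * t ^ (β + ε - 2)) * hβ

lemma abs_rpowSum_profile_deriv_le (hε0 : 0 ≤ ε) (hs : |s| ≤ 1) (ht0 : 0 < t)
    (ht1 : t ≤ 1) :
    |rpowSum (1 * β) (β - 1) (s * (β + ε)) (β + ε - 1) t|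
      ≤ (|β| + |β + ε|) * t ^ (1 - ε) * t ^ (β + ε - 2) := by
  have h1 : t ^ (β - 1) = t ^ (1 - ε) * t ^ (β + ε - 2) := by
    rw [← Real.rpow_add ht0]; ring_nf
  have h2 : t ^ (β + ε - 1) ≤ t ^ (1 - ε) * t ^ (β + ε - 2) := by
    rw [← Real.rpow_add ht0]
    exact Real.rpow_le_rpow_of_exponent_ge ht0 ht1 (by linarith)
  have hpos := Real.rpow_pos_of_pos ht0 (β + ε - 1)
  calc |rpowSum (1 * β) (β - 1) (s * (β + ε)) (β + ε - 1) t|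
      ≤ |β| * t ^ (β - 1) + |β + ε| * t ^ (β + ε - 1) := by
        rw [rpowSum, one_mul]
        refine (abs_add_le _ _).trans (add_le_add ?_ ?_)
        · rw [abs_mul, abs_of_pos (Real.rpow_pos_of_pos ht0 _)]
        · rw [abs_mul, abs_mul, abs_of_pos hpos, mul_assoc]
          exact mul_le_of_le_one_left (by positivity) hs
    _ ≤ (|β| + |β + ε|) * t ^ (1 - ε) * t ^ (β + ε - 2) := by
        rw [h1]
        nlinarith [mul_le_mul_of_nonneg_left h2 (abs_nonneg (β + ε))]

end Profile

lemma Metric.infDist_compl_pos_of_isBounded {E : Type*} [NormedAddCommGroup E] [NormedSpace ℝ E]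
    [Nontrivial E] {s : Set E} (hs : IsOpen s) (hb : Bornology.IsBounded s) {x : E}
    (hx : x ∈ s) : 0 < infDist x sᶜ := by
  have hne : sᶜ.Nonempty := by
    rw [nonempty_compl]
    rintro rfl
    exact NormedSpace.unbounded_univ ℝ E hb
  exact (hs.isClosed_compl.notMem_iff_infDist_pos hne).1 (notMem_compl_iff.2 hx)

section Collar

variable {N : ℕ} {Ω : Set (EuclideanSpace ℝ (Fin N))}

lemma isOpen_collar (hΩ : IsOpen Ω) (ρ : ℝ) : IsOpen (collar Ω ρ) :=
  hΩ.inter (isOpen_lt (continuous_infDist_pt _) continuous_const)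

lemma collar_mono {ρ ρ' : ℝ} (h : ρ ≤ ρ') : collar Ω ρ ⊆ collar Ω ρ' :=
  fun _ hx => ⟨hx.1, hx.2.trans_le h⟩

def CollarBound (Ω : Set (EuclideanSpace ℝ (Fin N))) (ρ M : ℝ) : Prop :=
  ContDiffOn ℝ 2 (bdist Ω) (collar Ω ρ) ∧ (∀ x ∈ collar Ω ρ, ‖gradient (bdist Ω) x‖ = 1) ∧
    ∀ x ∈ collar Ω ρ, |lap (bdist Ω) x| ≤ M

lemma GoodCollar.exists_collarBound {ρ₀ : ℝ} (h : GoodCollar Ω ρ₀) : ∃ M, CollarBound Ω ρ₀ M :=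
  let ⟨_, hδ, hgrad, M, hM⟩ := h
  ⟨M, hδ, hgrad, hM⟩

lemma CollarBound.mono {ρ ρ' M : ℝ} (h : CollarBound Ω ρ' M) (hρ : ρ ≤ ρ') :
    CollarBound Ω ρ M :=
  ⟨h.1.mono (collar_mono hρ), fun x hx => h.2.1 x (collar_mono hρ hx),
    fun x hx => h.2.2 x (collar_mono hρ hx)⟩

variable {β ε μ s ρ M : ℝ} {h : EuclideanSpace ℝ (Fin N) → ℝ}

lemma eqOn_rpowSum_comp_bdist (hpos : ∀ x ∈ Ω, 0 < bdist Ω x)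
    (hh : ∀ x, h x = bdist Ω x ^ β * (1 + s * bdist Ω x ^ ε)) :
    EqOn h (rpowSum 1 β s (β + ε) ∘ bdist Ω) Ω := fun x hx => by
  rw [hh, Function.comp_apply, rpowSum_profile_eq (hpos x hx)]

lemma contDiffOn_bdist_profile (hpos : ∀ x ∈ Ω, 0 < bdist Ω x)
    (hδ : ContDiffOn ℝ 2 (bdist Ω) (collar Ω ρ))
    (hh : ∀ x, h x = bdist Ω x ^ β * (1 + s * bdist Ω x ^ ε)) :
    ContDiffOn ℝ 2 h (collar Ω ρ) :=
  ContDiffOn.congr (fun x hx => (contDiffAt_rpowSum (hpos x hx.1).ne').contDiffWithinAt.comp x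
      (hδ x hx) (mapsTo_image _ _))
    fun _ hx => eqOn_rpowSum_comp_bdist hpos hh hx.1

lemma abs_schrodinger_bdist_profile_sub_le (hΩ : IsOpen Ω) (hpos : ∀ x ∈ Ω, 0 < bdist Ω x)
    (hC : CollarBound Ω ρ M) (hρ1 : ρ ≤ 1) (hε0 : 0 ≤ ε) (hε1 : ε ≤ 1)
    (hs : |s| ≤ 1) (hβ : β * (β - 1) + μ = 0)
    (hh : ∀ x, h x = bdist Ω x ^ β * (1 + s * bdist Ω x ^ ε)) {x : EuclideanSpace ℝ (Fin N)}
    (hx : x ∈ collar Ω ρ) :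
    |(-lap h x - μ / bdist Ω x ^ 2 * h x)
        - (-(s * (ε * (ε + 2 * β - 1))) * bdist Ω x ^ (β + ε - 2))|
      ≤ M * (|β| + |β + ε|) * ρ ^ (1 - ε) * bdist Ω x ^ (β + ε - 2) := by
  obtain ⟨hδ, hgrad, hM⟩ := hC
  have hEq := eqOn_rpowSum_comp_bdist hpos hh
  have ht0 := hpos x hx.1
  have hlap : lap h x = rpowSum (1 * β * (β - 1)) (β - 1 - 1) (s * (β + ε) * (β + ε - 1))
      (β + ε - 1 - 1) (bdist Ω x) + rpowSum (1 * β) (β - 1) (s * (β + ε)) (β + ε - 1) (bdist Ω x)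
        * lap (bdist Ω) x := by
    rw [(eventuallyEq_of_mem ((isOpen_collar hΩ ρ).mem_nhds hx) fun y hy => hEq hy.1).lap_eq,
      lap_comp (isOpen_collar hΩ ρ) hδ (fun y hy => hasDerivAt_rpowSum (hpos y hy.1).ne')
        (fun y hy => hasDerivAt_rpowSum (hpos y hy.1).ne') hx, hgrad x hx]
    ring
  set t := bdist Ω x
  set F' := rpowSum (1 * β) (β - 1) (s * (β + ε)) (β + ε - 1) t
  have hF' : |F'| ≤ (|β| + |β + ε|) * ρ ^ (1 - ε) * t ^ (β + ε - 2) := by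
    refine (abs_rpowSum_profile_deriv_le hε0 hs ht0 (hx.2.le.trans hρ1)).trans ?_
    gcongr
    exact hx.2.le
  have hODE := rpowSum_profile_second_deriv_add (s := s) (ε := ε) hβ ht0
  calc _ = |F'| * |lap (bdist Ω) x| := by
        rw [hlap, hEq hx.1, Function.comp_apply, ← abs_mul, ← abs_neg]
        congr 1
        linear_combination hODE
    _ ≤ ((|β| + |β + ε|) * ρ ^ (1 - ε) * t ^ (β + ε - 2)) * M :=
        mul_le_mul hF' (hM x hx) (abs_nonneg _) ((abs_nonneg _).trans hF')
    _ = _ := by ring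

lemma bdist_profile_pos (hpos : ∀ x ∈ Ω, 0 < bdist Ω x) (hρ1 : ρ ≤ 1) (hε0 : 0 < ε)
    (hs : |s| ≤ 1) (hh : ∀ x, h x = bdist Ω x ^ β * (1 + s * bdist Ω x ^ ε)) :
    ∀ x ∈ collar Ω ρ, 0 < h x := fun x hx => by
  have ht0 := hpos x hx.1
  have hlt : bdist Ω x ^ ε < 1 := Real.rpow_lt_one ht0.le (hx.2.trans_le hρ1) hε0
  have hpow := Real.rpow_pos_of_pos ht0 ε
  rw [hh]
  refine mul_pos (Real.rpow_pos_of_pos ht0 β) ?_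
  nlinarith [neg_abs_le s, abs_nonneg s]

lemma superHarm_and_pos_bdist_profile (hΩ : IsOpen Ω) (hpos : ∀ x ∈ Ω, 0 < bdist Ω x)
    (hC : CollarBound Ω ρ M) (hρ1 : ρ ≤ 1) (hε0 : 0 < ε) (hε1 : ε ≤ 1) (hs : |s| ≤ 1)
    (hβ : β * (β - 1) + μ = 0) (hh : ∀ x, h x = bdist Ω x ^ β * (1 + s * bdist Ω x ^ ε))
    (hc : M * (|β| + |β + ε|) * ρ ^ (1 - ε) ≤ -(s * (ε * (ε + 2 * β - 1)))) :
    SuperHarm Ω μ (collar Ω ρ) h ∧ ∀ x ∈ collar Ω ρ, 0 < h x := by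
  refine ⟨⟨contDiffOn_bdist_profile hpos hC.1 hh, fun x hx => ?_⟩,
    bdist_profile_pos hpos hρ1 hε0 hs hh⟩
  have hest := abs_le.1 (abs_schrodinger_bdist_profile_sub_le hΩ hpos hC hρ1 hε0.le hε1 hs hβ hh hx)
  have hw := Real.rpow_pos_of_pos (hpos x hx.1) (β + ε - 2)
  nlinarith [mul_le_mul_of_nonneg_right hc hw.le]

lemma subHarm_and_pos_bdist_profile (hΩ : IsOpen Ω) (hpos : ∀ x ∈ Ω, 0 < bdist Ω x)
    (hC : CollarBound Ω ρ M) (hρ1 : ρ ≤ 1) (hε0 : 0 < ε) (hε1 : ε ≤ 1) (hs : |s| ≤ 1)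
    (hβ : β * (β - 1) + μ = 0) (hh : ∀ x, h x = bdist Ω x ^ β * (1 + s * bdist Ω x ^ ε))
    (hc : M * (|β| + |β + ε|) * ρ ^ (1 - ε) ≤ s * (ε * (ε + 2 * β - 1))) :
    SubHarm Ω μ (collar Ω ρ) h ∧ ∀ x ∈ collar Ω ρ, 0 < h x := by
  refine ⟨⟨contDiffOn_bdist_profile hpos hC.1 hh, fun x hx => ?_⟩,
    bdist_profile_pos hpos hρ1 hε0 hs hh⟩
  have hest := abs_le.1 (abs_schrodinger_bdist_profile_sub_le hΩ hpos hC hρ1 hε0.le hε1 hs hβ hh hx)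
  have hw := Real.rpow_pos_of_pos (hpos x hx.1) (β + ε - 2)
  nlinarith [mul_le_mul_of_nonneg_right hc hw.le]

end Collar

lemma eventually_mul_rpow_lt {K c p : ℝ} (hp : 0 < p) (hc : 0 < c) :
    ∀ᶠ ρ in 𝓝[>] 0, K * ρ ^ p < c := by
  have hlim : Tendsto (fun ρ : ℝ => K * ρ ^ p) (𝓝 0) (𝓝 0) := by
    simpa [Real.zero_rpow hp.ne'] using ((Real.continuous_rpow_const hp.le).tendsto 0).const_mul K
  exact (hlim.mono_left nhdsWithin_le_nhds).eventually_lt_const hc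

theorem stmt5_general {N : ℕ} (hN : 2 ≤ N) (Ω : Set (EuclideanSpace ℝ (Fin N)))
    (hΩo : IsOpen Ω) (hΩb : Bornology.IsBounded Ω)
    (ρ₀ : ℝ) (hρ₀ : GoodCollar Ω ρ₀) (μ : ℝ) (hμ : μ < 1 / 4)
    (ε : ℝ) (hε0 : 0 < ε) (hε1 : ε < min 1 (Real.sqrt (1 - 4 * μ))) :
    ∃ ρ, 0 < ρ ∧ ρ < min 1 ρ₀ ∧
      (SuperHarm Ω μ (collar Ω ρ)
          (fun x => bdist Ω x ^ (1 / 2 + Real.sqrt (1 / 4 - μ)) * (1 - bdist Ω x ^ ε)) ∧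
        ∀ x ∈ collar Ω ρ,
          0 < bdist Ω x ^ (1 / 2 + Real.sqrt (1 / 4 - μ)) * (1 - bdist Ω x ^ ε)) ∧
      (SuperHarm Ω μ (collar Ω ρ)
          (fun x => bdist Ω x ^ (1 / 2 - Real.sqrt (1 / 4 - μ)) * (1 + bdist Ω x ^ ε)) ∧
        ∀ x ∈ collar Ω ρ,
          0 < bdist Ω x ^ (1 / 2 - Real.sqrt (1 / 4 - μ)) * (1 + bdist Ω x ^ ε)) ∧
      (SubHarm Ω μ (collar Ω ρ)
          (fun x => bdist Ω x ^ (1 / 2 + Real.sqrt (1 / 4 - μ)) * (1 + bdist Ω x ^ ε)) ∧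
        ∀ x ∈ collar Ω ρ,
          0 < bdist Ω x ^ (1 / 2 + Real.sqrt (1 / 4 - μ)) * (1 + bdist Ω x ^ ε)) ∧
      (SubHarm Ω μ (collar Ω ρ)
          (fun x => bdist Ω x ^ (1 / 2 - Real.sqrt (1 / 4 - μ)) * (1 - bdist Ω x ^ ε)) ∧
        ∀ x ∈ collar Ω ρ,
          0 < bdist Ω x ^ (1 / 2 - Real.sqrt (1 / 4 - μ)) * (1 - bdist Ω x ^ ε)) := by
  have : Nonempty (Fin N) := ⟨⟨0, by omega⟩⟩
  have hpos : ∀ x ∈ Ω, 0 < bdist Ω x := fun x hx => infDist_compl_pos_of_isBounded hΩo hΩb hx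
  obtain ⟨M, hC⟩ := hρ₀.exists_collarBound
  set r := √(1 / 4 - μ)
  have hr2 : r ^ 2 = 1 / 4 - μ := Real.sq_sqrt (by linarith)
  have hε1' : ε < 1 := hε1.trans_le (min_le_left _ _)
  have hε2r : ε < 2 * r := by
    rw [← Real.sqrt_sq (by positivity : 0 ≤ 2 * r), show (2 * r) ^ 2 = 1 - 4 * μ by linarith]
    exact hε1.trans_le (min_le_right _ _)
  have hβp : (1 / 2 + r) * (1 / 2 + r - 1) + μ = 0 := by linear_combination hr2
  have hβm : (1 / 2 - r) * (1 / 2 - r - 1) + μ = 0 := by linear_combination hr2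
  obtain ⟨ρ, ⟨hρp, hρm⟩, hρ0, hρ1⟩ : ∃ ρ,
      (M * (|1 / 2 + r| + |1 / 2 + r + ε|) * ρ ^ (1 - ε) < ε * (2 * r - ε) ∧
        M * (|1 / 2 - r| + |1 / 2 - r + ε|) * ρ ^ (1 - ε) < ε * (2 * r - ε)) ∧
      ρ ∈ Ioo 0 (min 1 ρ₀) :=
    (((eventually_mul_rpow_lt (by linarith) (by nlinarith)).and
      (eventually_mul_rpow_lt (by linarith) (by nlinarith))).and
      (Ioo_mem_nhdsGT (lt_min one_pos hρ₀.1))).exists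
  have hρ1' : ρ ≤ 1 := hρ1.le.trans (min_le_left _ _)
  have hCρ := hC.mono (hρ1.le.trans (min_le_right _ _))
  refine ⟨ρ, hρ0, hρ1, ?_, ?_, ?_, ?_⟩
  · exact superHarm_and_pos_bdist_profile hΩo hpos hCρ hρ1' hε0 hε1'.le (s := -1) (by norm_num)
      hβp (fun _ => by ring) (by nlinarith)
  · exact superHarm_and_pos_bdist_profile hΩo hpos hCρ hρ1' hε0 hε1'.le (s := 1) (by norm_num)
      hβm (fun _ => by ring) (by nlinarith)
  · exact subHarm_and_pos_bdist_profile hΩo hpos hCρ hρ1' hε0 hε1'.le (s := 1) (by norm_num)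
      hβp (fun _ => by ring) (by nlinarith)
  · exact subHarm_and_pos_bdist_profile hΩo hpos hCρ hρ1' hε0 hε1'.le (s := -1) (by norm_num)
      hβm (fun _ => by ring) (by nlinarith)

/-- Let `μ < 1/4` and `ε ∈ (0, min{1, √(1-4μ)})`. Then on some collar
`Ω_ρ` with `ρ ∈ (0, min{1, ρ₀})`, the functions `δ^{β₊}(1-δ^ε)` and `δ^{β₋}(1+δ^ε)` are
positive super-harmonics of `L_μ`, while `δ^{β₊}(1+δ^ε)` and `δ^{β₋}(1-δ^ε)` are positive
sub-harmonics of `L_μ`. -/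
theorem stmt5 {N : ℕ} (hN : 2 ≤ N) (Ω : Set (EuclideanSpace ℝ (Fin N)))
    (hΩo : IsOpen Ω) (hΩne : Ω.Nonempty) (hΩb : Bornology.IsBounded Ω)
    (ρ₀ : ℝ) (hρ₀ : GoodCollar Ω ρ₀) (μ : ℝ) (hμ : μ < 1 / 4)
    (ε : ℝ) (hε0 : 0 < ε) (hε1 : ε < min 1 (Real.sqrt (1 - 4 * μ))) :
    ∃ ρ, 0 < ρ ∧ ρ < min 1 ρ₀ ∧
      (SuperHarm Ω μ (collar Ω ρ)
          (fun x => bdist Ω x ^ (1 / 2 + Real.sqrt (1 / 4 - μ)) * (1 - bdist Ω x ^ ε)) ∧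
        ∀ x ∈ collar Ω ρ,
          0 < bdist Ω x ^ (1 / 2 + Real.sqrt (1 / 4 - μ)) * (1 - bdist Ω x ^ ε)) ∧
      (SuperHarm Ω μ (collar Ω ρ)
          (fun x => bdist Ω x ^ (1 / 2 - Real.sqrt (1 / 4 - μ)) * (1 + bdist Ω x ^ ε)) ∧
        ∀ x ∈ collar Ω ρ,
          0 < bdist Ω x ^ (1 / 2 - Real.sqrt (1 / 4 - μ)) * (1 + bdist Ω x ^ ε)) ∧
      (SubHarm Ω μ (collar Ω ρ)
          (fun x => bdist Ω x ^ (1 / 2 + Real.sqrt (1 / 4 - μ)) * (1 + bdist Ω x ^ ε)) ∧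
        ∀ x ∈ collar Ω ρ,
          0 < bdist Ω x ^ (1 / 2 + Real.sqrt (1 / 4 - μ)) * (1 + bdist Ω x ^ ε)) ∧
      (SubHarm Ω μ (collar Ω ρ)
          (fun x => bdist Ω x ^ (1 / 2 - Real.sqrt (1 / 4 - μ)) * (1 - bdist Ω x ^ ε)) ∧
        ∀ x ∈ collar Ω ρ,
          0 < bdist Ω x ^ (1 / 2 - Real.sqrt (1 / 4 - μ)) * (1 - bdist Ω x ^ ε)) :=
  stmt5_general hN Ω hΩo hΩb ρ₀ hρ₀ μ hμ ε hε0 hε1
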